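/- arXiv:1603.02093 — 8 statements merged into one kernel-verified Lean document; each statement's English description precedes it below -/
import Mathlib

section
/- If an element x of a commutative binoid has a loop of length 1 with initial pair r+1 > r where r ≥ 2 and rx ≠ ∞, then (r-1)x is a torsion element: 2(r-1)x = 2rx but (r-1)x ≠ rx. -/
theorem nsmul_eq_of_le_of_nsmul_succ_eq {M : Type*} [AddMonoid M] {x : M} {r n : ℕ}
    (hloop : r • x = (r + 1) • x) (hrn : r ≤ n) : n • x = r • x := by
  induction n, hrn using Nat.le_induction with
  | base => rfl
  | succ n _ ih => rw [succ_nsmul, ih, ← succ_nsmul, ← hloop]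

theorem stmt_1_general {M : Type*} [AddCommMonoid M] (x : M) (r : ℕ) (hr : 2 ≤ r)
    (hloop : r • x = (r + 1) • x)
    (hmin : ∀ r' s' : ℕ, r' < s' → r' • x = s' • x → r ≤ r') :
    2 • ((r - 1) • x) = 2 • (r • x) ∧ (r - 1) • x ≠ r • x := by
  constructor
  · -- since `r ≥ 2`, both `2 * (r - 1)` and `2 * r` are at least the start `r` of the loop
    rw [← mul_nsmul', ← mul_nsmul',
      nsmul_eq_of_le_of_nsmul_succ_eq (n := 2 * (r - 1)) hloop (by omega),
      nsmul_eq_of_le_of_nsmul_succ_eq (n := 2 * r) hloop (by omega)]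
  · intro h
    have hle : r ≤ r - 1 := hmin (r - 1) r (by omega) h
    omega

/-- If `x` has a loop of length 1 with initial pair `r+1 > r`, `r ≥ 2`, and `r • x ≠ ∞`,
then `(r-1) • x` is a torsion element: `2 • ((r-1) • x) = 2 • (r • x)` but `(r-1) • x ≠ r • x`. -/
theorem stmt_1 {M : Type*} [AddCommMonoid M] (inf : M)
    (habs : ∀ a : M, a + inf = inf) (x : M) (r : ℕ) (hr : 2 ≤ r)
    (hloop : r • x = (r + 1) • x)
    (hmin : ∀ r' s' : ℕ, r' < s' → r' • x = s' • x → r ≤ r')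
    (hninf : r • x ≠ inf) :
    2 • ((r - 1) • x) = 2 • (r • x) ∧ (r - 1) • x ≠ r • x :=
  stmt_1_general x r hr hloop hmin
end

section
/- Let M be a commutative binoid generated by a single element x that is neither nilpotent nor a unit. Then the following are equivalent: (a) x is cancellative; (b) M is infinite; (c) x is loopfree. Moreover, if additionally x ≠ 2x, these are also equivalent to (d) M is torsion-free, and (e) M is isomorphic to ℕ with an absorbing element ∞ adjoined. -/
/-!
Every element of `M` other than `∞` is a multiple `n x`. If `x` is not loopfree, then
`n x = (n + d) x` for some `d > 0`, so the multiples of `x` are eventually periodic. Hence `M`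
is finite; cancelling `n x` from `n x + 0 = n x + d x` would make `x` a unit; and
`t = (n + 1) d`, which lies past the preperiod and is a multiple of the period, gives
`t • x = t • (2 • x)`, so torsion-freeness would force `x = 2x`. Conversely, if `x` is
loopfree, equations between elements become equations between exponents in `ℕ`, and
`n ↦ n x` extends to an isomorphism `ℕ^∞ ≃ M`.
-/

open Function

section Periodicity

variable {M : Type*} [AddMonoid M] {x : M}

theorem nsmul_add_add_mul_eq_of_nsmul_add_eq {n d : ℕ} (h : (n + d) • x = n • x) (m j : ℕ) :
    (n + m + j * d) • x = (n + m) • x := by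
  induction j with
  | zero => simp
  | succ j ih =>
    calc (n + m + (j + 1) * d) • x = (n + d) • x + (m + j * d) • x := by
          rw [← add_nsmul]; ring_nf
      _ = (n + m + j * d) • x := by rw [h, ← add_nsmul, add_assoc]
      _ = (n + m) • x := ih

theorem exists_nsmul_add_eq_of_not_injective (h : ¬Injective (· • x : ℕ → M)) :
    ∃ n d : ℕ, 0 < d ∧ (n + d) • x = n • x := by
  simp only [Injective, not_forall] at h
  obtain ⟨a, b, hab, hne⟩ := h
  rcases lt_or_gt_of_ne hne with hlt | hlt
  · exact ⟨a, b - a, by omega, by rw [Nat.add_sub_cancel' hlt.le]; exact hab.symm⟩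
  · exact ⟨b, a - b, by omega, by rw [Nat.add_sub_cancel' hlt.le]; exact hab⟩

theorem exists_lt_nsmul_eq_of_nsmul_add_eq {n d : ℕ} (hd : 0 < d) (h : (n + d) • x = n • x)
    (k : ℕ) : ∃ j < n + d, k • x = j • x := by
  rcases lt_or_ge k n with hk | hk
  · exact ⟨k, by omega, rfl⟩
  obtain ⟨i, rfl⟩ := Nat.exists_eq_add_of_le hk
  refine ⟨n + i % d, by have := Nat.mod_lt i hd; omega, ?_⟩
  rw [← nsmul_add_add_mul_eq_of_nsmul_add_eq h (i % d) (i / d), add_assoc, Nat.mod_add_div']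

end Periodicity

section Binoid

variable {M : Type*} [AddCommMonoid M]

def IsBinoidCancellative (inf x : M) : Prop :=
  ∀ a b : M, x + a = x + b → x + a ≠ inf → a = b

def IsBinoidTorsionFree (inf : M) : Prop :=
  ∀ n : ℕ, 1 ≤ n → ∀ a b : M, a ≠ inf → b ≠ inf → n • a = n • b → a = b

variable {inf x : M}

theorem IsBinoidCancellative.nsmul (habs : ∀ a : M, a + inf = inf)
    (hc : IsBinoidCancellative inf x) (n : ℕ) : IsBinoidCancellative inf (n • x) := by
  induction n with
  | zero => intro a b hab _; simpa using hab
  | succ n ih =>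
    intro a b hab hne
    simp only [succ_nsmul', add_assoc] at hab hne
    refine ih a b (hc _ _ hab hne) fun h => hne ?_
    rw [h, habs]

theorem nsmul_ne_of_not_nilpotent (habs : ∀ a : M, a + inf = inf)
    (hnotnil : ∀ n : ℕ, 1 ≤ n → n • x ≠ inf) (k : ℕ) : k • x ≠ inf := by
  rcases k with _ | k
  · intro h
    apply hnotnil 1 le_rfl
    rw [one_nsmul, ← add_zero x, ← zero_nsmul x, h, habs]
  · exact hnotnil _ k.succ_pos

theorem injective_nsmul_iff_infinite (hgen : ∀ a : M, a = inf ∨ ∃ n : ℕ, a = n • x) :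
    Injective (· • x : ℕ → M) ↔ Infinite M := by
  refine ⟨fun hl => Infinite.of_injective _ hl, fun hi => ?_⟩
  by_contra hl
  obtain ⟨n, d, hd, h⟩ := exists_nsmul_add_eq_of_not_injective hl
  have : Finite M := by
    refine Finite.of_surjective (fun o : Option (Fin (n + d)) => o.elim inf ((·.val • x))) ?_
    intro a
    rcases hgen a with rfl | ⟨k, rfl⟩
    · exact ⟨none, rfl⟩
    · obtain ⟨j, hj, hk⟩ := exists_lt_nsmul_eq_of_nsmul_add_eq hd h k
      exact ⟨some ⟨j, hj⟩, hk.symm⟩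
  exact not_finite M

theorem isBinoidCancellative_iff_injective_nsmul (habs : ∀ a : M, a + inf = inf)
    (hgen : ∀ a : M, a = inf ∨ ∃ n : ℕ, a = n • x) (hne : ∀ k : ℕ, k • x ≠ inf)
    (hnotunit : ¬∃ y : M, x + y = 0) :
    IsBinoidCancellative inf x ↔ Injective (· • x : ℕ → M) := by
  constructor
  · intro hc n m h
    wlog hnm : n ≤ m generalizing n m
    · exact (this h.symm (le_of_not_ge hnm)).symm
    obtain ⟨d, rfl⟩ := Nat.exists_eq_add_of_le hnm
    have hd : 0 = d • x := hc.nsmul habs n 0 (d • x)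
      (by rw [add_zero, ← add_nsmul]; exact h) (by rw [add_zero]; exact hne n)
    rcases d with _ | k
    · rfl
    · exact absurd ⟨k • x, by rw [← succ_nsmul', ← hd]⟩ hnotunit
  · intro hl a b hab hxa
    rcases hgen a with ha | ⟨p, rfl⟩
    · exact absurd (by rw [ha, habs]) hxa
    rcases hgen b with hb | ⟨q, rfl⟩
    · rw [hb, habs] at hab
      exact absurd hab hxa
    rw [← succ_nsmul', ← succ_nsmul'] at hab
    rw [Nat.succ_injective (hl hab)]

theorem injective_nsmul_iff_isBinoidTorsionFree
    (hgen : ∀ a : M, a = inf ∨ ∃ n : ℕ, a = n • x) (hne : ∀ k : ℕ, k • x ≠ inf)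
    (hx2 : x ≠ 2 • x) :
    Injective (· • x : ℕ → M) ↔ IsBinoidTorsionFree inf := by
  constructor
  · intro hl n hn a b ha hb hab
    rcases hgen a with rfl | ⟨p, rfl⟩
    · exact absurd rfl ha
    rcases hgen b with rfl | ⟨q, rfl⟩
    · exact absurd rfl hb
    rw [← mul_nsmul', ← mul_nsmul'] at hab
    rw [Nat.eq_of_mul_eq_mul_left hn (hl hab)]
  · intro ht
    by_contra hl
    obtain ⟨n, d, hd, h⟩ := exists_nsmul_add_eq_of_not_injective hl
    set t := (n + 1) * d with ht_def
    have hnt : n ≤ t := by nlinarith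
    have htt : t • x = t • (2 • x) := by
      have := nsmul_add_add_mul_eq_of_nsmul_add_eq h (t - n) (n + 1)
      rw [Nat.add_sub_cancel' hnt] at this
      rw [← mul_nsmul', ← this, ← ht_def, mul_two]
    refine hx2 (ht t (by nlinarith) x (2 • x) ?_ ?_ htt)
    · simpa using hne 1
    · exact hne 2

def WithTop.natNsmulHom (inf x : M) (habs : ∀ a : M, a + inf = inf) : WithTop ℕ →+ M where
  toFun := WithTop.recTopCoe (C := fun _ => M) inf (· • x)
  map_zero' := zero_nsmul x
  map_add' a b := by
    induction a using WithTop.recTopCoe with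
    | top => rw [top_add, WithTop.recTopCoe_top, add_comm, habs]
    | coe k =>
      induction b using WithTop.recTopCoe with
      | top => rw [add_top, WithTop.recTopCoe_top, habs]
      | coe l => simp only [← WithTop.coe_add, WithTop.recTopCoe_coe, add_nsmul]

theorem injective_nsmul_iff_exists_addEquiv (habs : ∀ a : M, a + inf = inf)
    (hgen : ∀ a : M, a = inf ∨ ∃ n : ℕ, a = n • x) (hne : ∀ k : ℕ, k • x ≠ inf) :
    Injective (· • x : ℕ → M) ↔ ∃ e : M ≃+ WithTop ℕ, e inf = ⊤ := by
  constructor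
  · intro hl
    let F := WithTop.natNsmulHom inf x habs
    have hF : Bijective F := by
      constructor
      · intro a b hab
        induction a using WithTop.recTopCoe <;> induction b using WithTop.recTopCoe
        · rfl
        · exact absurd hab.symm (hne _)
        · exact absurd hab (hne _)
        · exact congrArg _ (hl hab)
      · intro a
        rcases hgen a with rfl | ⟨k, rfl⟩
        · exact ⟨⊤, rfl⟩
        · exact ⟨k, rfl⟩
    exact ⟨(AddEquiv.ofBijective F hF).symm, (AddEquiv.symm_apply_eq _).mpr rfl⟩
  · rintro ⟨e, -⟩
    exact (injective_nsmul_iff_infinite hgen).mpr (e.toEquiv.infinite_iff.mpr inferInstance)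

end Binoid

/-- For a one-generated commutative binoid `M` with generator `x` neither nilpotent nor a
unit: (a) `x` cancellative ↔ (b) `M` infinite ↔ (c) `x` loopfree; and if moreover `x ≠ 2x`,
also ↔ (d) `M` torsion-free ↔ (e) `M ≅ ℕ^∞`. -/
theorem stmt_2 {M : Type*} [AddCommMonoid M] (inf : M)
    (habs : ∀ a : M, a + inf = inf) (x : M)
    (hgen : ∀ a : M, a = inf ∨ ∃ n : ℕ, a = n • x)
    (hnotnil : ∀ n : ℕ, 1 ≤ n → n • x ≠ inf)
    (hnotunit : ¬ ∃ y : M, x + y = 0) :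
    (((∀ a b : M, x + a = x + b → x + a ≠ inf → a = b) ↔ Infinite M) ∧
      (Infinite M ↔ ∀ n m : ℕ, n • x = m • x → n = m)) ∧
    (x ≠ 2 • x →
      (((∀ n m : ℕ, n • x = m • x → n = m) ↔
          (∀ n : ℕ, 1 ≤ n → ∀ a b : M, a ≠ inf → b ≠ inf → n • a = n • b → a = b)) ∧
        ((∀ n : ℕ, 1 ≤ n → ∀ a b : M, a ≠ inf → b ≠ inf → n • a = n • b → a = b) ↔
          ∃ e : M ≃+ WithTop ℕ, e inf = ⊤))) := by
  have hne := nsmul_ne_of_not_nilpotent habs hnotnil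
  have hinf := injective_nsmul_iff_infinite hgen
  refine ⟨⟨(isBinoidCancellative_iff_injective_nsmul habs hgen hne hnotunit).trans hinf,
    hinf.symm⟩, fun hx2 => ?_⟩
  have htf := injective_nsmul_iff_isBinoidTorsionFree hgen hne hx2
  exact ⟨htf, htf.symm.trans (injective_nsmul_iff_exists_addEquiv habs hgen hne)⟩
end

section
/- Let M be a commutative binoid generated by two elements x and y, and suppose M is an infinite binoid group (all non-∞ elements are invertible). Then the intersection of the submonoids generated by x and by y is trivial: ⟨x⟩ ∩ ⟨y⟩ = {0, ∞}. -/
/-!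
Suppose `a = n • x = m • y ≠ ∞` with `n, m > 0`. Then `x, y ≠ ∞`, so `x` has an inverse, which is
not `∞` and hence of the form `p • x + q • y`. Multiplying `(p + 1) • x + q • y = 0` by `m` and
replacing `m • y` by `n • x` shows that `x` has finite order; symmetrically so does `y`. But then
`M` consists of `∞` and the finitely many sums `i • x + j • y`, contradicting `Infinite M`.
-/

open Pointwise

section Binoid

variable {M : Type*} [AddCommMonoid M] {inf x y : M}

lemma isOfFinAddOrder_of_nsmul_eq_nsmul {n m p q : ℕ} (hm : 0 < m) (hxy : n • x = m • y)
    (hinv : x + (p • x + q • y) = 0) : IsOfFinAddOrder x := by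
  refine isOfFinAddOrder_iff_nsmul_eq_zero.2 ⟨m * (p + 1) + q * n, by positivity, ?_⟩
  calc (m * (p + 1) + q * n) • x = m • (x + (p • x + q • y)) := by
        rw [smul_add, smul_add, smul_comm m q y, ← hxy]
        module
    _ = 0 := by rw [hinv, smul_zero]

lemma finite_of_isOfFinAddOrder (hgen : ∀ a : M, a = inf ∨ ∃ n m : ℕ, a = n • x + m • y)
    (hx : IsOfFinAddOrder x) (hy : IsOfFinAddOrder y) : Finite M := by
  have hcover : (Set.univ : Set M) ⊆
      insert inf ((AddSubmonoid.multiples x : Set M) + AddSubmonoid.multiples y) := by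
    intro a _
    rcases hgen a with rfl | ⟨n, m, rfl⟩
    · exact Set.mem_insert _ _
    · exact Or.inr (Set.add_mem_add ⟨n, rfl⟩ ⟨m, rfl⟩)
  exact Set.finite_univ_iff.1
    (((hx.finite_multiples.add hy.finite_multiples).insert inf).subset hcover)

variable (habs : ∀ a : M, a + inf = inf)
include habs

lemma nsmul_eq_absorbing {n : ℕ} (hn : 0 < n) : n • inf = inf := by
  obtain ⟨k, rfl⟩ := Nat.exists_eq_add_of_lt hn
  rw [succ_nsmul, habs]

lemma zero_ne_absorbing [Nontrivial M] : (0 : M) ≠ inf := by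
  intro h
  obtain ⟨b, hb⟩ := exists_ne inf
  exact hb (by rw [← add_zero b, h, habs])

lemma isOfFinAddOrder_of_nsmul_eq_nsmul_of_ne_absorbing
    (hgen : ∀ a : M, a = inf ∨ ∃ n m : ℕ, a = n • x + m • y)
    (hgroup : ∀ a : M, a ≠ inf → ∃ b : M, a + b = 0) (h0 : (0 : M) ≠ inf) (hx : x ≠ inf)
    {n m : ℕ} (hm : 0 < m) (hxy : n • x = m • y) : IsOfFinAddOrder x := by
  obtain ⟨b, hb⟩ := hgroup x hx
  have hb_ne : b ≠ inf := by
    rintro rfl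
    exact h0 (hb ▸ habs x)
  obtain ⟨p, q, rfl⟩ := (hgen b).resolve_left hb_ne
  exact isOfFinAddOrder_of_nsmul_eq_nsmul hm hxy hb

end Binoid

/-- If `M` is an infinite binoid group generated (as a binoid) by two elements `x`, `y`,
then `⟨x⟩ ∩ ⟨y⟩ = {0, ∞}`. -/
theorem stmt_5 {M : Type*} [AddCommMonoid M] (inf : M)
    (habs : ∀ a : M, a + inf = inf) (x y : M)
    (hgen : ∀ a : M, a = inf ∨ ∃ n m : ℕ, a = n • x + m • y)
    (hgroup : ∀ a : M, a ≠ inf → ∃ b : M, a + b = 0)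
    (hinfinite : Infinite M) :
    {a : M | (∃ n : ℕ, a = n • x) ∨ a = inf} ∩ {a : M | (∃ m : ℕ, a = m • y) ∨ a = inf}
      = {0, inf} := by
  have h0 := zero_ne_absorbing habs
  have hgen' : ∀ a : M, a = inf ∨ ∃ n m : ℕ, a = n • y + m • x := fun a =>
    (hgen a).imp_right fun ⟨n, m, h⟩ => ⟨m, n, h.trans (add_comm _ _)⟩
  ext a
  simp only [Set.mem_inter_iff, Set.mem_ofPred_eq, Set.mem_insert_iff, Set.mem_singleton_iff]
  constructor
  · rintro ⟨⟨n, rfl⟩ | ha, ⟨m, hm⟩ | ha'⟩ <;> try exact Or.inr ‹_›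
    by_contra! hne
    have hn : 0 < n := Nat.pos_of_ne_zero fun h => hne.1 (by simp [h])
    have hm0 : 0 < m := Nat.pos_of_ne_zero fun h => hne.1 (by simp [hm, h])
    have hx : x ≠ inf := fun h => hne.2 (by rw [h, nsmul_eq_absorbing habs hn])
    have hy : y ≠ inf := fun h => hne.2 (by rw [hm, h, nsmul_eq_absorbing habs hm0])
    have := finite_of_isOfFinAddOrder hgen
      (isOfFinAddOrder_of_nsmul_eq_nsmul_of_ne_absorbing habs hgen hgroup h0 hx hm0 hm)
      (isOfFinAddOrder_of_nsmul_eq_nsmul_of_ne_absorbing habs hgen' hgroup h0 hy hn hm.symm)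
    exact not_finite M
  · rintro (rfl | rfl)
    · exact ⟨Or.inl ⟨0, (zero_nsmul x).symm⟩, Or.inl ⟨0, (zero_nsmul y).symm⟩⟩
    · exact ⟨Or.inr rfl, Or.inr rfl⟩
end

section
/- Let M be an infinite two-generated commutative binoid group with generators x and y. Then there exist n, m ≥ 1 minimal with respect to nx + my = 0, in the sense that for any other pair r, s ≥ 1 with rx + sy = 0 one has r = ln and s = lm for some l ≥ 1. -/
/-!
Since `M` is infinite, `0 ≠ ∞`, and neither generator is `∞`: otherwise `M` would be `∞` together
with the multiples of a single element of finite order. So `x`, `y` and `x + y` are units, and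
writing `-(x + y) = a x + c y` gives a relation `(a + 1) x + (c + 1) y = 0`. If two relations
`(n, m)` and `(r, s)` had `r m ≠ n s`, eliminating `y` and then `x` would show that
`d = |r m - n s| ≥ 1` kills both generators, making `M` finite. So all relations lie on one line
through the origin, and since relations can be subtracted from each other, the one with the least
positive first coordinate generates all of them.
-/

theorem exists_forall_eq_mul_of_sub_closed_of_proportional {P : ℕ → ℕ → Prop}
    (hsub : ∀ {n m r s : ℕ}, P n m → P r s → n ≤ r → m ≤ s → P (r - n) (s - m))
    (hprop : ∀ {n m r s : ℕ}, P n m → P r s → r * m = n * s)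
    (hex : ∃ n m : ℕ, 1 ≤ n ∧ 1 ≤ m ∧ P n m) :
    ∃ n m : ℕ, 1 ≤ n ∧ 1 ≤ m ∧ P n m ∧
      ∀ r s : ℕ, 1 ≤ r → 1 ≤ s → P r s → ∃ l : ℕ, 1 ≤ l ∧ r = l * n ∧ s = l * m := by
  classical
  set n := Nat.find hex
  obtain ⟨m, hn, hm, hP⟩ := Nat.find_spec hex
  refine ⟨n, m, hn, hm, hP, fun r => ?_⟩
  induction r using Nat.strong_induction_on with
  | _ r ih =>
  intro s hr hs hrs
  have hline : r * m = n * s := hprop hP hrs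
  rcases (Nat.find_min' hex ⟨s, hr, hs, hrs⟩ : n ≤ r).eq_or_lt with rfl | hlt
  · exact ⟨1, le_rfl, (one_mul n).symm, by
      rw [one_mul]; exact (Nat.eq_of_mul_eq_mul_left (by omega) hline).symm⟩
  · have hms : m < s :=
      Nat.lt_of_mul_lt_mul_left (hline ▸ Nat.mul_lt_mul_of_pos_right hlt (by omega))
    obtain ⟨l, hl, hlr, hls⟩ :=
      ih (r - n) (by omega) (s - m) (by omega) (by omega) (hsub hP hrs hlt.le hms.le)
    exact ⟨l + 1, by omega, by rw [add_one_mul]; omega, by rw [add_one_mul]; omega⟩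

section Absorbing

variable {M : Type*} [AddCommMonoid M] {inf : M}

theorem zero_ne_of_add_absorbing [Nontrivial M] (habs : ∀ a : M, a + inf = inf) :
    (0 : M) ≠ inf := by
  intro h
  have hconst : ∀ a : M, a = inf := fun a => by rw [← habs a, ← h, add_zero]
  obtain ⟨a, b, hab⟩ := exists_pair_ne M
  exact hab ((hconst a).trans (hconst b).symm)

theorem IsAddUnit.ne_of_add_absorbing (habs : ∀ a : M, a + inf = inf) (h0 : (0 : M) ≠ inf)
    {a : M} (ha : IsAddUnit a) : a ≠ inf := by
  rintro rfl
  obtain ⟨b, hb⟩ := ha.exists_neg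
  rw [add_comm, habs] at hb
  exact h0 hb.symm

theorem nsmul_eq_of_add_absorbing (habs : ∀ a : M, a + inf = inf) {n : ℕ} (hn : n ≠ 0) :
    n • inf = inf := by
  obtain ⟨k, rfl⟩ := Nat.exists_eq_succ_of_ne_zero hn
  rw [succ_nsmul, habs]

theorem finite_of_nsmul_eq_zero {x y : M}
    (hgen : ∀ a : M, a = inf ∨ ∃ n m : ℕ, a = n • x + m • y)
    {d : ℕ} (hd : d ≠ 0) (hx : d • x = 0) (hy : d • y = 0) : Finite M := by
  have hd : 0 < d := Nat.pos_of_ne_zero hd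
  have hfin :
      (insert inf (Set.image2 (fun i j : ℕ => i • x + j • y) (Set.Iio d) (Set.Iio d))).Finite :=
    ((Set.finite_Iio d).image2 _ (Set.finite_Iio d)).insert inf
  refine Set.finite_univ_iff.mp (hfin.subset fun a _ => ?_)
  rcases hgen a with rfl | ⟨n, m, rfl⟩
  · exact Set.mem_insert _ _
  · refine Set.mem_insert_of_mem _ ⟨n % d, Nat.mod_lt n hd, m % d, Nat.mod_lt m hd, ?_⟩
    dsimp only
    rw [← nsmul_eq_mod_nsmul n hx, ← nsmul_eq_mod_nsmul m hy]

theorem finite_of_forall_eq_or_nsmul (habs : ∀ a : M, a + inf = inf)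
    (hgroup : ∀ a : M, a ≠ inf → ∃ b : M, a + b = 0) (h0 : (0 : M) ≠ inf) {y : M}
    (hgen : ∀ a : M, a = inf ∨ ∃ m : ℕ, a = m • y) : Finite M := by
  -- In both cases `M` is viewed as generated by `0` and an element of finite order.
  by_cases hy : y = inf
  · refine finite_of_nsmul_eq_zero (inf := inf) (x := (0 : M)) (y := 0) (fun a => ?_)
      one_ne_zero (smul_zero 1) (smul_zero 1)
    rcases hgen a with ha | ⟨_ | m, rfl⟩
    · exact .inl ha
    · exact .inr ⟨0, 0, by simp⟩
    · exact .inl (hy ▸ nsmul_eq_of_add_absorbing habs m.succ_ne_zero)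
  · obtain ⟨b, hb⟩ := hgroup y hy
    obtain ⟨k, rfl⟩ := (hgen b).resolve_left
      ((IsAddUnit.of_add_eq_zero_right y hb).ne_of_add_absorbing habs h0)
    have hk : (k + 1) • y = 0 := by rwa [succ_nsmul, add_comm]
    refine finite_of_nsmul_eq_zero (inf := inf) (x := (0 : M)) (fun a => ?_) k.succ_ne_zero
      (smul_zero _) hk
    exact (hgen a).imp_right fun ⟨m, hm⟩ => ⟨0, m, by rw [hm, zero_nsmul, zero_add]⟩

theorem ne_of_forall_eq_or_nsmul_add_nsmul [Infinite M] (habs : ∀ a : M, a + inf = inf)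
    (hgroup : ∀ a : M, a ≠ inf → ∃ b : M, a + b = 0) {x y : M}
    (hgen : ∀ a : M, a = inf ∨ ∃ n m : ℕ, a = n • x + m • y) : x ≠ inf := by
  intro hx
  refine Finite.false <|
    finite_of_forall_eq_or_nsmul habs hgroup (zero_ne_of_add_absorbing habs) (y := y) fun a => ?_
  rcases hgen a with ha | ⟨_ | n, m, rfl⟩
  · exact .inl ha
  · exact .inr ⟨m, by rw [zero_nsmul, zero_add]⟩
  · left
    rw [hx, nsmul_eq_of_add_absorbing habs n.succ_ne_zero, add_comm, habs]

end Absorbing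

section Relations

variable {M : Type*} [AddCommMonoid M] {x y : M}

theorem IsAddUnit.nsmul_dist_eq_zero (hx : IsAddUnit x) {a b : ℕ} (h : a • x = b • x) :
    a.dist b • x = 0 := by
  wlog hba : b ≤ a generalizing a b
  · rw [Nat.dist_comm]
    exact this h.symm (by omega)
  have : (a - b) • x + b • x = 0 + b • x := by
    rw [← add_nsmul, Nat.sub_add_cancel hba, h, zero_add]
  rw [Nat.dist, Nat.sub_eq_zero_of_le hba, add_zero]
  exact (hx.nsmul b).add_right_cancel this

theorem nsmul_add_nsmul_sub_eq_zero {n m r s : ℕ} (h₁ : n • x + m • y = 0)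
    (h₂ : r • x + s • y = 0) (hn : n ≤ r) (hm : m ≤ s) : (r - n) • x + (s - m) • y = 0 := by
  calc (r - n) • x + (s - m) • y = ((r - n) • x + (s - m) • y) + (n • x + m • y) := by
        rw [h₁, add_zero]
    _ = r • x + s • y := by
        rw [add_add_add_comm, ← add_nsmul, ← add_nsmul, Nat.sub_add_cancel hn,
          Nat.sub_add_cancel hm]
    _ = 0 := h₂

theorem mul_nsmul_eq_of_nsmul_add_nsmul_eq_zero (hy : IsAddUnit y) {n m r s : ℕ}
    (h₁ : n • x + m • y = 0) (h₂ : r • x + s • y = 0) : (m * r) • x = (s * n) • x := by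
  refine (hy.nsmul (m * s)).add_right_cancel ?_
  calc (m * r) • x + (m * s) • y = m • (r • x + s • y) := by rw [smul_add, mul_nsmul', mul_nsmul']
    _ = s • (n • x + m • y) := by rw [h₁, h₂, smul_zero, smul_zero]
    _ = (s * n) • x + (m * s) • y := by rw [smul_add, mul_comm m s, mul_nsmul', mul_nsmul']

theorem mul_eq_mul_of_nsmul_add_nsmul_eq_zero [Infinite M] {inf : M}
    (hgen : ∀ a : M, a = inf ∨ ∃ n m : ℕ, a = n • x + m • y) (hx : IsAddUnit x)
    (hy : IsAddUnit y) {n m r s : ℕ} (h₁ : n • x + m • y = 0) (h₂ : r • x + s • y = 0) :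
    r * m = n * s := by
  have hdx : (m * r).dist (s * n) • x = 0 :=
    hx.nsmul_dist_eq_zero (mul_nsmul_eq_of_nsmul_add_nsmul_eq_zero hy h₁ h₂)
  have hdy : (m * r).dist (s * n) • y = 0 := by
    rw [mul_comm m r, mul_comm s n, Nat.dist_comm]
    rw [add_comm] at h₁ h₂
    exact hy.nsmul_dist_eq_zero (mul_nsmul_eq_of_nsmul_add_nsmul_eq_zero hx h₁ h₂)
  by_contra hne
  have hd : (m * r).dist (s * n) ≠ 0 :=
    (Nat.dist_pos_of_ne fun h => hne (by rw [mul_comm r, h, mul_comm])).ne'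
  exact (finite_of_nsmul_eq_zero hgen hd hdx hdy).false

theorem exists_nsmul_add_nsmul_eq_zero {inf : M}
    (hgen : ∀ a : M, a = inf ∨ ∃ n m : ℕ, a = n • x + m • y)
    (hinf : ∀ a : M, IsAddUnit a → a ≠ inf) (hx : IsAddUnit x) (hy : IsAddUnit y) :
    ∃ n m : ℕ, 1 ≤ n ∧ 1 ≤ m ∧ n • x + m • y = 0 := by
  obtain ⟨b, hb⟩ := (hx.add hy).exists_neg
  obtain ⟨a, c, rfl⟩ := (hgen b).resolve_left (hinf _ (IsAddUnit.of_add_eq_zero_right _ hb))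
  refine ⟨a + 1, c + 1, by omega, by omega, ?_⟩
  rw [succ_nsmul, succ_nsmul, ← hb]
  abel

end Relations

/-- In an infinite two-generated binoid group with generators `x`, `y` there exist
`n, m ≥ 1` minimal with `n • x + m • y = 0`: every pair `r, s ≥ 1` with
`r • x + s • y = 0` is an integer multiple of `(n, m)`. -/
theorem stmt_6 {M : Type*} [AddCommMonoid M] (inf : M)
    (habs : ∀ a : M, a + inf = inf) (x y : M)
    (hgen : ∀ a : M, a = inf ∨ ∃ n m : ℕ, a = n • x + m • y)
    (hgroup : ∀ a : M, a ≠ inf → ∃ b : M, a + b = 0)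
    (hinfinite : Infinite M) :
    ∃ n m : ℕ, 1 ≤ n ∧ 1 ≤ m ∧ n • x + m • y = 0 ∧
      ∀ r s : ℕ, 1 ≤ r → 1 ≤ s → r • x + s • y = 0 →
        ∃ l : ℕ, 1 ≤ l ∧ r = l * n ∧ s = l * m := by
  have h0 : (0 : M) ≠ inf := zero_ne_of_add_absorbing habs
  have hunit : ∀ a : M, a ≠ inf → IsAddUnit a := fun a ha =>
    let ⟨b, hb⟩ := hgroup a ha
    IsAddUnit.of_add_eq_zero b hb
  have hx : IsAddUnit x := hunit x (ne_of_forall_eq_or_nsmul_add_nsmul habs hgroup hgen)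
  have hy : IsAddUnit y := hunit y <| ne_of_forall_eq_or_nsmul_add_nsmul habs hgroup (y := x)
    fun a => (hgen a).imp_right fun ⟨n, m, h⟩ => ⟨m, n, h.trans (add_comm _ _)⟩
  exact exists_forall_eq_mul_of_sub_closed_of_proportional
    (P := fun r s => r • x + s • y = 0) nsmul_add_nsmul_sub_eq_zero
    (mul_eq_mul_of_nsmul_add_nsmul_eq_zero hgen hx hy)
    (exists_nsmul_add_nsmul_eq_zero hgen (fun a ha => ha.ne_of_add_absorbing habs h0) hx hy)
end

section
/- Let M be an infinite two-generated commutative binoid group with generators x, y, and let n, m ≥ 1 be minimal with nx + my = 0 (so any relation rx + sy = 0 with r,s ≥ 1 is an integer multiple of (n,m)). Then M is torsion-free if and only if gcd(n, m) = 1. -/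
/-!
Every relation `r • x + s • y = 0` is a multiple `l • (n, m)`, including the degenerate ones with
`r = 0` or `s = 0`, since adding such a relation to `(n, m)` would contradict minimality.
Writing `n = d n'`, `m = d m'` with `d = gcd(n, m)`, torsion-freeness cancels `d` in
`d • (n' • x + m' • y) = 0`, so `(n', m')` is a relation and `d = 1`. Conversely, if
`k • (i • x + j • y) = 0` then `(k i, k j) = l (n, m)`, and coprimality gives `k ∣ l`, so
`i • x + j • y` is a multiple of `n • x + m • y = 0`; cancellation in the group of
non-absorbing elements reduces `k • a = k • b` to this case.
-/

section Binoid

variable {M : Type*} [AddCommMonoid M] {inf x y : M} {n m : ℕ}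

theorem nsmul_absorbing (habs : ∀ a : M, a + inf = inf) {k : ℕ} (hk : 0 < k) :
    k • inf = inf := by
  obtain ⟨j, rfl⟩ := Nat.exists_eq_add_one_of_ne_zero hk.ne'
  rw [succ_nsmul, habs]

theorem ne_absorbing_of_nsmul_eq_zero (habs : ∀ a : M, a + inf = inf) (h0 : (0 : M) ≠ inf)
    {k : ℕ} (hk : 0 < k) {c : M} (hc : k • c = 0) : c ≠ inf := by
  rintro rfl
  exact h0 (hc.symm.trans (nsmul_absorbing habs hk))

theorem exists_eq_mul_of_nsmul_add_nsmul_eq_zero (hn : 1 ≤ n) (hm : 1 ≤ m)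
    (hrel : n • x + m • y = 0)
    (hminrel : ∀ r s : ℕ, 1 ≤ r → 1 ≤ s → r • x + s • y = 0 →
      ∃ l : ℕ, 1 ≤ l ∧ r = l * n ∧ s = l * m)
    {r s : ℕ} (h : r • x + s • y = 0) : ∃ l : ℕ, r = l * n ∧ s = l * m := by
  rcases Nat.eq_zero_or_pos r with rfl | hr <;> rcases Nat.eq_zero_or_pos s with rfl | hs
  · exact ⟨0, by simp, by simp⟩
  · exfalso
    rw [zero_smul, zero_add] at h
    obtain ⟨l, -, hln, hlm⟩ :=
      hminrel n (s + m) hn (by omega) (by rw [add_nsmul, h, zero_add, hrel])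
    obtain rfl : l = 1 := (Nat.mul_eq_right (by omega)).mp hln.symm
    omega
  · exfalso
    rw [zero_smul, add_zero] at h
    obtain ⟨l, -, hln, hlm⟩ :=
      hminrel (r + n) m (by omega) hm (by rw [add_nsmul, h, zero_add, hrel])
    obtain rfl : l = 1 := (Nat.mul_eq_right (by omega)).mp hlm.symm
    omega
  · obtain ⟨l, -, hl⟩ := hminrel r s hr hs h
    exact ⟨l, hl⟩

theorem zero_ne_absorbing_s7 (habs : ∀ a : M, a + inf = inf) (hm : 1 ≤ m)
    (hrels : ∀ r s : ℕ, r • x + s • y = 0 → ∃ l : ℕ, r = l * n ∧ s = l * m) :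
    (0 : M) ≠ inf := by
  intro h0
  have hx : x = 0 := by rw [← add_zero x, h0, habs]
  obtain ⟨l, hl1, hl0⟩ := hrels 1 0 (by simp [hx])
  rcases Nat.eq_zero_or_pos l with rfl | hl
  · simp at hl1
  · exact absurd hl0 (Nat.mul_pos hl hm).ne

theorem gcd_eq_one_of_nsmul_injective (habs : ∀ a : M, a + inf = inf) (h0 : (0 : M) ≠ inf)
    (hn : 1 ≤ n) (hrel : n • x + m • y = 0)
    (hrels : ∀ r s : ℕ, r • x + s • y = 0 → ∃ l : ℕ, r = l * n ∧ s = l * m)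
    (htf : ∀ k : ℕ, 1 ≤ k → ∀ a b : M, a ≠ inf → b ≠ inf → k • a = k • b → a = b) :
    Nat.gcd n m = 1 := by
  set d := Nat.gcd n m
  have hd : 0 < d := Nat.gcd_pos_of_pos_left m hn
  obtain ⟨n', hn'⟩ := Nat.gcd_dvd_left n m
  obtain ⟨m', hm'⟩ := Nat.gcd_dvd_right n m
  have hdc : d • (n' • x + m' • y) = 0 := by
    rw [smul_add, ← mul_smul, ← mul_smul, ← hn', ← hm', hrel]
  have hc : n' • x + m' • y = 0 :=
    htf d hd _ 0 (ne_absorbing_of_nsmul_eq_zero habs h0 hd hdc) h0 (by rw [hdc, smul_zero])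
  obtain ⟨l, hl, -⟩ := hrels n' m' hc
  have hdl : d * l = 1 :=
    (Nat.mul_eq_right (Nat.one_le_iff_ne_zero.mp hn)).mp (by rw [mul_assoc, ← hl, ← hn'])
  exact Nat.eq_one_of_mul_eq_one_right hdl

theorem eq_zero_of_nsmul_eq_zero (habs : ∀ a : M, a + inf = inf) (h0 : (0 : M) ≠ inf)
    (hgen : ∀ a : M, a = inf ∨ ∃ i j : ℕ, a = i • x + j • y) (hrel : n • x + m • y = 0)
    (hrels : ∀ r s : ℕ, r • x + s • y = 0 → ∃ l : ℕ, r = l * n ∧ s = l * m)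
    (hcop : Nat.gcd n m = 1) {k : ℕ} (hk : 0 < k) {c : M} (hc : k • c = 0) : c = 0 := by
  obtain hinf | ⟨i, j, rfl⟩ := hgen c
  · exact absurd hinf (ne_absorbing_of_nsmul_eq_zero habs h0 hk hc)
  rw [smul_add, ← mul_smul, ← mul_smul] at hc
  obtain ⟨l, hi, hj⟩ := hrels _ _ hc
  obtain ⟨t, rfl⟩ : k ∣ l := by
    simpa [Nat.gcd_mul_left, hcop] using Nat.dvd_gcd ⟨i, hi.symm⟩ ⟨j, hj.symm⟩
  rw [mul_assoc] at hi hj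
  rw [Nat.eq_of_mul_eq_mul_left hk hi, Nat.eq_of_mul_eq_mul_left hk hj, mul_smul, mul_smul,
    ← smul_add, hrel, smul_zero]

end Binoid

theorem stmt_7_general {M : Type*} [AddCommMonoid M] (inf : M)
    (habs : ∀ a : M, a + inf = inf) (x y : M)
    (hgen : ∀ a : M, a = inf ∨ ∃ i j : ℕ, a = i • x + j • y)
    (hgroup : ∀ a : M, a ≠ inf → ∃ b : M, a + b = 0)
    (n m : ℕ) (hn : 1 ≤ n) (hm : 1 ≤ m) (hrel : n • x + m • y = 0)
    (hminrel : ∀ r s : ℕ, 1 ≤ r → 1 ≤ s → r • x + s • y = 0 →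
      ∃ l : ℕ, 1 ≤ l ∧ r = l * n ∧ s = l * m) :
    (∀ k : ℕ, 1 ≤ k → ∀ a b : M, a ≠ inf → b ≠ inf → k • a = k • b → a = b) ↔
      Nat.gcd n m = 1 := by
  have hrels : ∀ r s : ℕ, r • x + s • y = 0 → ∃ l : ℕ, r = l * n ∧ s = l * m :=
    fun _ _ => exists_eq_mul_of_nsmul_add_nsmul_eq_zero hn hm hrel hminrel
  have h0 := zero_ne_absorbing_s7 habs hm hrels
  refine ⟨gcd_eq_one_of_nsmul_injective habs h0 hn hrel hrels, ?_⟩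
  intro hcop k hk a b _ hb hab
  obtain ⟨b', hbb'⟩ := hgroup b hb
  have hkab' : k • (a + b') = 0 := by rw [smul_add, hab, ← smul_add, hbb', smul_zero]
  have hab' : a + b' = 0 := eq_zero_of_nsmul_eq_zero habs h0 hgen hrel hrels hcop hk hkab'
  calc a = a + (b + b') := by rw [hbb', add_zero]
    _ = (a + b') + b := by abel
    _ = b := by rw [hab', zero_add]

/-- Let `M` be an infinite two-generated binoid group with generators `x`, `y`, and
`n, m ≥ 1` minimal with `n • x + m • y = 0`. Then `M` is torsion-free iff `gcd(n, m) = 1`. -/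
theorem stmt_7 {M : Type*} [AddCommMonoid M] (inf : M)
    (habs : ∀ a : M, a + inf = inf) (x y : M)
    (hgen : ∀ a : M, a = inf ∨ ∃ i j : ℕ, a = i • x + j • y)
    (hgroup : ∀ a : M, a ≠ inf → ∃ b : M, a + b = 0)
    (hinfinite : Infinite M)
    (n m : ℕ) (hn : 1 ≤ n) (hm : 1 ≤ m) (hrel : n • x + m • y = 0)
    (hminrel : ∀ r s : ℕ, 1 ≤ r → 1 ≤ s → r • x + s • y = 0 →
      ∃ l : ℕ, 1 ≤ l ∧ r = l * n ∧ s = l * m) :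
    (∀ k : ℕ, 1 ≤ k → ∀ a b : M, a ≠ inf → b ≠ inf → k • a = k • b → a = b) ↔
      Nat.gcd n m = 1 :=
  stmt_7_general inf habs x y hgen hgroup n m hn hm hrel hminrel
end

section
/- Let M be an infinite two-generated commutative binoid group with generators x, y and minimal relation nx + my = 0 where gcd(n, m) = 1. Then M is isomorphic to ℤ^∞, via the map sending x to m and y to -n. -/
/-!
Since `n • x + m • y = 0` with `n, m ≥ 1`, both generators are additive units, so every element
other than `∞` lies in the group of units, which `x` and `y` generate. With Bézout coefficients
`u * n + v * m = 1`, the unit `g = v • x - u • y` satisfies `m • g = x` and `-n • g = y`, so this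
group is cyclic on `g`. It is infinite because `M` is, so `z ↦ z • g` is injective and extends,
with `⊤ ↦ ∞`, to an isomorphism `ℤ^∞ ≃+ M`.
-/

open Function

lemma IsAddUnit.of_nsmul_add_nsmul_eq_zero {M : Type*} [AddCommMonoid M] {x y : M} {n m : ℕ}
    (hn : n ≠ 0) (h : n • x + m • y = 0) : IsAddUnit x :=
  (isAddUnit_nsmul_iff hn).1 <| isAddUnit_of_add_isAddUnit_left (h ▸ isAddUnit_zero)

lemma exists_zsmul_eq_of_isCoprime {G : Type*} [AddCommGroup G] {x y : G} {n m : ℤ}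
    (hnm : IsCoprime n m) (h : n • x + m • y = 0) : ∃ g : G, m • g = x ∧ -n • g = y := by
  obtain ⟨u, v, huv⟩ := hnm
  refine ⟨v • x - u • y, ?_, ?_⟩
  · linear_combination (norm := module) (-u) • h + huv • x
  · linear_combination (norm := module) (-v) • h + huv • y

section Absorbing

variable {M : Type*} [AddCommMonoid M] {inf : M}

lemma IsAddUnit.ne_absorbing [Nontrivial M] (habs : ∀ a : M, a + inf = inf) {a : M}
    (ha : IsAddUnit a) : a ≠ inf := by
  rintro rfl
  obtain ⟨b, hb⟩ := ha.exists_neg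
  have hall : ∀ c : M, c = a := fun c => by
    rw [← add_zero c, ← hb, ← add_assoc, habs, add_comm, habs]
  exact not_subsingleton M ⟨fun c d => (hall c).trans (hall d).symm⟩

def AddMonoidHom.withTopExtend {G : Type*} [AddMonoid G] (f : G →+ M)
    (habs : ∀ a : M, a + inf = inf) : WithTop G →+ M where
  toFun a := WithTop.recTopCoe inf f a
  map_zero' := by exact f.map_zero
  map_add' := by
    rintro (_ | a) (_ | b)
    · exact (habs inf).symm
    · exact (add_comm _ _).trans (habs _) |>.symm
    · exact (habs _).symm
    · exact f.map_add a b

lemma exists_addEquiv_withTop_of_absorbing {G : Type*} [AddMonoid G] (f : G →+ M)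
    (habs : ∀ a : M, a + inf = inf) (hf : Injective f) (hinf : inf ∉ Set.range f)
    (hcover : ∀ a : M, a = inf ∨ a ∈ Set.range f) :
    ∃ e : M ≃+ WithTop G, e inf = ⊤ ∧ ∀ z, e (f z) = z := by
  have hbij : Bijective (f.withTopExtend habs) := by
    constructor
    · rintro (_ | a) (_ | b) h
      · rfl
      · exact (hinf ⟨b, h.symm⟩).elim
      · exact (hinf ⟨a, h⟩).elim
      · exact congrArg _ (hf h)
    · intro a
      obtain rfl | ⟨z, rfl⟩ := hcover a
      · exact ⟨⊤, rfl⟩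
      · exact ⟨z, rfl⟩
  let e := AddEquiv.ofBijective _ hbij
  exact ⟨e.symm, e.symm_apply_eq.2 rfl, fun z => e.symm_apply_eq.2 rfl⟩

lemma AddUnits.injective_coe_zsmul_of_infinite [Infinite M] (g : AddUnits M)
    (hcover : ∀ a : M, a = inf ∨ ∃ z : ℤ, ((z • g : AddUnits M) : M) = a) :
    Injective fun z : ℤ => ((z • g : AddUnits M) : M) := by
  refine AddUnits.val_injective.comp (injective_zsmul_iff_not_isOfFinAddOrder.2 fun hg => ?_)
  refine Set.infinite_univ (α := M) ((hg.finite_zmultiples.image (↑)).insert inf |>.subset ?_)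
  intro a _
  obtain rfl | ⟨z, rfl⟩ := hcover a
  · exact Set.mem_insert _ _
  · exact Set.mem_insert_of_mem _ ⟨z • g, AddSubgroup.zsmul_mem_zmultiples g z, rfl⟩

end Absorbing

theorem stmt_8_general {M : Type*} [AddCommMonoid M] (inf : M)
    (habs : ∀ a : M, a + inf = inf) (x y : M)
    (hgen : ∀ a : M, a = inf ∨ ∃ i j : ℕ, a = i • x + j • y)
    (hinfinite : Infinite M)
    (n m : ℕ) (hn : 1 ≤ n) (hm : 1 ≤ m) (hrel : n • x + m • y = 0)
    (hcop : Nat.gcd n m = 1) :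
    ∃ e : M ≃+ WithTop ℤ, e inf = ⊤ ∧ e x = ((m : ℤ) : WithTop ℤ) ∧
      e y = ((-(n : ℤ) : ℤ) : WithTop ℤ) := by
  have hx := IsAddUnit.of_nsmul_add_nsmul_eq_zero (by omega) hrel
  have hy := IsAddUnit.of_nsmul_add_nsmul_eq_zero (by omega) ((add_comm _ _).trans hrel)
  have hrel' : (n : ℤ) • hx.addUnit + (m : ℤ) • hy.addUnit = 0 := AddUnits.ext (by simpa using hrel)
  obtain ⟨g, hxg, hyg⟩ := exists_zsmul_eq_of_isCoprime (Nat.isCoprime_iff_coprime.2 hcop) hrel'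
  let f : ℤ →+ M := (AddUnits.coeHom M).comp (zmultiplesHom _ g)
  have hfx : f (m : ℤ) = x := congrArg AddUnits.val hxg
  have hfy : f (-n) = y := congrArg AddUnits.val hyg
  have hcover : ∀ a : M, a = inf ∨ a ∈ Set.range f := by
    refine fun a => (hgen a).imp_right fun ⟨i, j, ha⟩ => ?_
    rw [ha, ← AddMonoidHom.coe_mrange]
    exact add_mem (nsmul_mem (AddMonoidHom.mem_mrange.2 ⟨_, hfx⟩) i)
      (nsmul_mem (AddMonoidHom.mem_mrange.2 ⟨_, hfy⟩) j)
  have hinf : inf ∉ Set.range f := fun ⟨z, hz⟩ => (z • g).isAddUnit.ne_absorbing habs hz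
  obtain ⟨e, he_inf, he⟩ := exists_addEquiv_withTop_of_absorbing f habs
    (g.injective_coe_zsmul_of_infinite hcover) hinf hcover
  exact ⟨e, he_inf, hfx ▸ he _, hfy ▸ he _⟩

/-- An infinite two-generated binoid group with generators `x`, `y` and minimal relation
`n • x + m • y = 0`, `gcd(n, m) = 1`, is isomorphic to `ℤ^∞` via `x ↦ m`, `y ↦ -n`. -/
theorem stmt_8 {M : Type*} [AddCommMonoid M] (inf : M)
    (habs : ∀ a : M, a + inf = inf) (x y : M)
    (hgen : ∀ a : M, a = inf ∨ ∃ i j : ℕ, a = i • x + j • y)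
    (hgroup : ∀ a : M, a ≠ inf → ∃ b : M, a + b = 0)
    (hinfinite : Infinite M)
    (n m : ℕ) (hn : 1 ≤ n) (hm : 1 ≤ m) (hrel : n • x + m • y = 0)
    (hminrel : ∀ r s : ℕ, 1 ≤ r → 1 ≤ s → r • x + s • y = 0 →
      ∃ l : ℕ, 1 ≤ l ∧ r = l * n ∧ s = l * m)
    (hcop : Nat.gcd n m = 1) :
    ∃ e : M ≃+ WithTop ℤ, e inf = ⊤ ∧ e x = ((m : ℤ) : WithTop ℤ) ∧
      e y = ((-(n : ℤ) : ℤ) : WithTop ℤ) :=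
  stmt_8_general inf habs x y hgen hinfinite n m hn hm hrel hcop
end

section
/- Consider the amalgamated smash product N = ℕ^∞ ∧_{ℕ^∞} ℕ^∞ where the two copies of ℕ^∞ are ℕ^∞-binoids via 1 ↦ k and 1 ↦ l respectively (k, l ≥ 2), i.e., N = (ℕ × ℕ)^∞ modulo the congruence generated by (k, 0) = (0, l). The binoid homomorphism ψ: N → ℕ^∞ given by (n, m) ↦ (nl + mk)/gcd(k,l) is injective if and only if gcd(k, l) = 1. In particular, N is torsion-free if and only if k and l are coprime. -/
/-- The amalgamated smash product `ℕ^∞ ∧_{ℕ^∞} ℕ^∞` (structure maps `1 ↦ k`, `1 ↦ l`):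
the quotient of `(ℕ × ℕ)^∞` by the congruence generated by `(k, 0) = (0, l)`. -/
def Nsmash (k l : ℕ) : Type :=
  (addConGen (fun a b : WithTop (ℕ × ℕ) =>
    a = (((k, 0) : ℕ × ℕ) : WithTop (ℕ × ℕ)) ∧ b = (((0, l) : ℕ × ℕ) : WithTop (ℕ × ℕ)))).Quotient

instance (k l : ℕ) : AddCommMonoid (Nsmash k l) :=
  inferInstanceAs (AddCommMonoid (addConGen (fun a b : WithTop (ℕ × ℕ) =>
    a = (((k, 0) : ℕ × ℕ) : WithTop (ℕ × ℕ)) ∧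
      b = (((0, l) : ℕ × ℕ) : WithTop (ℕ × ℕ)))).Quotient)

/-- The canonical projection `(ℕ × ℕ)^∞ → ℕ^∞ ∧_{ℕ^∞} ℕ^∞`. -/
def Nsmash.mk (k l : ℕ) (a : WithTop (ℕ × ℕ)) : Nsmash k l :=
  (addConGen (fun a b : WithTop (ℕ × ℕ) =>
    a = (((k, 0) : ℕ × ℕ) : WithTop (ℕ × ℕ)) ∧
      b = (((0, l) : ℕ × ℕ) : WithTop (ℕ × ℕ)))).mk' a

/-!
In `Nsmash k l` the element `(n + s k, m)` equals `(n, m + s l)`. The weight `n l + m k` is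
invariant under this move, and when `gcd(k, l) = 1` two points of equal weight differ by exactly
such a move; hence `ψ`, the weight divided by `gcd(k, l)`, is injective, and torsion-freeness is
inherited from `ℕ`. When `g = gcd(k, l) > 1`, the first coordinate modulo `k` is a further
invariant, so `(k/g, 0) ≠ (0, l/g)` although both have the same image under `ψ` and
`g • (k/g, 0) = (k, 0) = (0, l) = g • (0, l/g)`.
-/

namespace Nsmash

variable {k l : ℕ}

def con (k l : ℕ) : AddCon (WithTop (ℕ × ℕ)) :=
  addConGen (fun a b : WithTop (ℕ × ℕ) =>
    a = (((k, 0) : ℕ × ℕ) : WithTop (ℕ × ℕ)) ∧ b = (((0, l) : ℕ × ℕ) : WithTop (ℕ × ℕ)))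

theorem mk_surjective : Function.Surjective (mk k l) :=
  AddCon.mk'_surjective (c := con k l)

theorem mk_add (a b : WithTop (ℕ × ℕ)) : mk k l (a + b) = mk k l a + mk k l b :=
  map_add (con k l).mk' a b

theorem mk_nsmul (c : ℕ) (a : WithTop (ℕ × ℕ)) : mk k l (c • a) = c • mk k l a :=
  map_nsmul (con k l).mk' c a

theorem mk_k_zero_eq_mk_zero_l : mk k l ((k, 0) : ℕ × ℕ) = mk k l ((0, l) : ℕ × ℕ) :=
  (con k l).eq.2 (AddConGen.Rel.of _ _ ⟨rfl, rfl⟩)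

theorem mk_add_mul_eq (n m s : ℕ) :
    mk k l ((n + s * k, m) : ℕ × ℕ) = mk k l ((n, m + s * l) : ℕ × ℕ) := by
  have h₁ : ((n + s * k, m) : ℕ × ℕ) = (n, m) + s • (k, 0) := by ext <;> simp
  have h₂ : ((n, m + s * l) : ℕ × ℕ) = (n, m) + s • (0, l) := by ext <;> simp
  rw [h₁, h₂, WithTop.coe_add, WithTop.coe_add, WithTop.coe_nsmul, WithTop.coe_nsmul, mk_add,
    mk_add, mk_nsmul, mk_nsmul, mk_k_zero_eq_mk_zero_l]

section lift

variable {M : Type*} [AddZeroClass M] (f : ℕ × ℕ →+ M) (hf : f (k, 0) = f (0, l))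

def lift : Nsmash k l →+ WithTop M :=
  (con k l).lift f.withTopMap <| AddCon.addConGen_le.2 <| by
    rintro _ _ ⟨rfl, rfl⟩
    exact congrArg ((↑) : M → WithTop M) hf

@[simp]
theorem lift_mk_top : lift f hf (mk k l ⊤) = ⊤ := rfl

@[simp]
theorem lift_mk_coe (p : ℕ × ℕ) : lift f hf (mk k l p) = f p := rfl

end lift

theorem mk_coe_ne_mk_top (p : ℕ × ℕ) : mk k l p ≠ mk k l ⊤ := fun h => by
  simpa using congrArg (lift (k := k) (l := l) (0 : ℕ × ℕ →+ ℕ) rfl) h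

@[elab_as_elim]
theorem induction_on {P : Nsmash k l → Prop} (x : Nsmash k l) (top : P (mk k l ⊤))
    (coe : ∀ p : ℕ × ℕ, P (mk k l p)) : P x := by
  obtain ⟨a, rfl⟩ := mk_surjective x
  induction a using WithTop.recTopCoe with
  | top => exact top
  | coe p => exact coe p

theorem exists_eq_mk_coe {a : Nsmash k l} (ha : a ≠ mk k l ⊤) : ∃ p : ℕ × ℕ, a = mk k l p := by
  induction a using induction_on with
  | top => exact absurd rfl ha
  | coe p => exact ⟨p, rfl⟩

theorem mk_coe_ne_mk_coe_of_natCast_ne {n m n' m' : ℕ} (h : (n : ZMod k) ≠ n') :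
    mk k l ((n, m) : ℕ × ℕ) ≠ mk k l ((n', m') : ℕ × ℕ) := fun he =>
  h <| WithTop.coe_injective <| by
    simpa using congrArg (lift ((Nat.castAddMonoidHom (ZMod k)).comp (AddMonoidHom.fst ℕ ℕ))
      (by simp)) he

def weight (k l : ℕ) : ℕ × ℕ →+ ℕ :=
  (AddMonoidHom.mulRight l).comp (AddMonoidHom.fst ℕ ℕ) +
    (AddMonoidHom.mulRight k).comp (AddMonoidHom.snd ℕ ℕ)

@[simp]
theorem weight_apply (p : ℕ × ℕ) : weight k l p = p.1 * l + p.2 * k := rfl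

theorem weight_eq_of_mk_eq {p q : ℕ × ℕ} (h : mk k l p = mk k l q) :
    weight k l p = weight k l q := by
  have := congrArg (lift (weight k l) (by simp [mul_comm])) h
  rwa [lift_mk_coe, lift_mk_coe, WithTop.coe_inj] at this

theorem mk_coe_eq_mk_coe_of_weight_eq (hk : k ≠ 0) (hco : k.Coprime l) {p q : ℕ × ℕ}
    (h : weight k l p = weight k l q) : mk k l p = mk k l q := by
  wlog hpq : q.1 ≤ p.1 generalizing p q
  · exact (this h.symm (by omega)).symm
  obtain ⟨n, m⟩ := p
  obtain ⟨n', m'⟩ := q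
  obtain ⟨d, rfl⟩ := Nat.exists_eq_add_of_le hpq
  simp only [weight_apply, add_mul] at h
  have hd : d * l + m * k = m' * k := by omega
  have hkdl : k ∣ d * l := (Nat.dvd_add_left (Dvd.intro_left m rfl)).1 (hd ▸ Dvd.intro_left m' rfl)
  obtain ⟨s, rfl⟩ := hco.dvd_of_dvd_mul_right hkdl
  have hm : m' = m + s * l :=
    (Nat.eq_of_mul_eq_mul_right (Nat.pos_of_ne_zero hk) (by rw [← hd]; ring)).symm
  rw [hm, mul_comm k s, mk_add_mul_eq]

theorem eq_of_nsmul_eq_nsmul (hk : k ≠ 0) (hco : k.Coprime l) {c : ℕ} (hc : c ≠ 0)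
    {a b : Nsmash k l} (ha : a ≠ mk k l ⊤) (hb : b ≠ mk k l ⊤) (h : c • a = c • b) : a = b := by
  obtain ⟨p, rfl⟩ := exists_eq_mk_coe ha
  obtain ⟨q, rfl⟩ := exists_eq_mk_coe hb
  rw [← mk_nsmul, ← mk_nsmul, ← WithTop.coe_nsmul, ← WithTop.coe_nsmul] at h
  have hw := weight_eq_of_mk_eq h
  rw [map_nsmul, map_nsmul, smul_eq_mul, smul_eq_mul] at hw
  exact mk_coe_eq_mk_coe_of_weight_eq hk hco (Nat.eq_of_mul_eq_mul_left (Nat.pos_of_ne_zero hc) hw)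

theorem mk_div_gcd_ne (hk : k ≠ 0) (hg : k.gcd l ≠ 1) :
    mk k l ((k / k.gcd l, 0) : ℕ × ℕ) ≠ mk k l ((0, l / k.gcd l) : ℕ × ℕ) := by
  refine mk_coe_ne_mk_coe_of_natCast_ne fun h => ?_
  have hg₀ : 0 < k.gcd l := Nat.gcd_pos_of_pos_left l (Nat.pos_of_ne_zero hk)
  have hpos : 0 < k / k.gcd l := Nat.div_pos (Nat.le_of_dvd (by omega) (k.gcd_dvd_left l)) hg₀
  have hlt : k / k.gcd l < k := Nat.div_lt_self (by omega) (by omega)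
  rw [Nat.cast_zero, ZMod.natCast_eq_zero_iff] at h
  exact hpos.ne' (Nat.eq_zero_of_dvd_of_lt h hlt)

theorem gcd_nsmul_mk_div_gcd :
    k.gcd l • mk k l ((k / k.gcd l, 0) : ℕ × ℕ) = k.gcd l • mk k l ((0, l / k.gcd l) : ℕ × ℕ) := by
  rw [← mk_nsmul, ← mk_nsmul, ← WithTop.coe_nsmul, ← WithTop.coe_nsmul, Prod.smul_mk,
    Prod.smul_mk, smul_zero, smul_eq_mul, smul_eq_mul, Nat.mul_div_cancel' (k.gcd_dvd_left l),
    Nat.mul_div_cancel' (k.gcd_dvd_right l), mk_k_zero_eq_mk_zero_l]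

def psi (k l : ℕ) : Nsmash k l →+ WithTop ℕ :=
  lift (weight (k / k.gcd l) (l / k.gcd l)) <| by
    rw [weight_apply, weight_apply, zero_mul, zero_mul, add_zero, zero_add,
      ← Nat.mul_div_assoc _ (k.gcd_dvd_right l), ← Nat.mul_div_assoc _ (k.gcd_dvd_left l), mul_comm]

@[simp]
theorem psi_mk_top : psi k l (mk k l ⊤) = ⊤ := rfl

theorem psi_mk_coe (n m : ℕ) :
    psi k l (mk k l ((n, m) : ℕ × ℕ)) = (((n * l + m * k) / k.gcd l : ℕ) : WithTop ℕ) := by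
  rw [psi, lift_mk_coe, weight_apply, Nat.add_div_of_dvd_right
    (Nat.dvd_mul_left_of_dvd (k.gcd_dvd_right l) n), Nat.mul_div_assoc _ (k.gcd_dvd_right l),
    Nat.mul_div_assoc _ (k.gcd_dvd_left l)]
  rfl

theorem eq_psi_of_apply_mk {ψ : Nsmash k l →+ WithTop ℕ} (htop : ψ (mk k l ⊤) = ⊤)
    (hval : ∀ n m : ℕ, ψ (mk k l ((n, m) : ℕ × ℕ)) =
      (((n * l + m * k) / k.gcd l : ℕ) : WithTop ℕ)) : ψ = psi k l := by
  ext x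
  induction x using induction_on with
  | top => exact htop
  | coe p => exact (hval p.1 p.2).trans (psi_mk_coe p.1 p.2).symm

theorem psi_injective_iff (hk : k ≠ 0) : Function.Injective (psi k l) ↔ k.gcd l = 1 := by
  refine ⟨fun hinj => ?_, fun hco x y h => ?_⟩
  · by_contra hg
    exact mk_div_gcd_ne hk hg (hinj (by simp [psi, mul_comm]))
  induction x using induction_on <;> induction y using induction_on <;>
    simp only [psi, lift_mk_top, lift_mk_coe, WithTop.top_ne_coe, WithTop.coe_ne_top,
      WithTop.coe_inj, hco, Nat.div_one] at h
  · rfl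
  · exact mk_coe_eq_mk_coe_of_weight_eq hk hco h

end Nsmash

theorem stmt_12_general (k l : ℕ) (hk : 2 ≤ k) :
    (∃ ψ : Nsmash k l →+ WithTop ℕ,
      ψ (Nsmash.mk k l ⊤) = ⊤ ∧
      ∀ n m : ℕ, ψ (Nsmash.mk k l (((n, m) : ℕ × ℕ) : WithTop (ℕ × ℕ))) =
        (((n * l + m * k) / Nat.gcd k l : ℕ) : WithTop ℕ)) ∧
    (∀ ψ : Nsmash k l →+ WithTop ℕ,
      ψ (Nsmash.mk k l ⊤) = ⊤ →
      (∀ n m : ℕ, ψ (Nsmash.mk k l (((n, m) : ℕ × ℕ) : WithTop (ℕ × ℕ))) =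
        (((n * l + m * k) / Nat.gcd k l : ℕ) : WithTop ℕ)) →
      (Function.Injective ψ ↔ Nat.gcd k l = 1)) ∧
    ((∀ c : ℕ, 1 ≤ c → ∀ a b : Nsmash k l, a ≠ Nsmash.mk k l ⊤ → b ≠ Nsmash.mk k l ⊤ →
        c • a = c • b → a = b) ↔ Nat.gcd k l = 1) := by
  have hk₀ : k ≠ 0 := by omega
  refine ⟨⟨Nsmash.psi k l, Nsmash.psi_mk_top, Nsmash.psi_mk_coe⟩,
    fun ψ htop hval => Nsmash.eq_psi_of_apply_mk htop hval ▸ Nsmash.psi_injective_iff hk₀,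
    fun htf => ?_, fun hco c hc a b => Nsmash.eq_of_nsmul_eq_nsmul hk₀ hco (by omega)⟩
  by_contra hg
  exact Nsmash.mk_div_gcd_ne hk₀ hg <| htf _ (Nat.gcd_pos_of_pos_left l (by omega)) _ _
    (Nsmash.mk_coe_ne_mk_top _) (Nsmash.mk_coe_ne_mk_top _) Nsmash.gcd_nsmul_mk_div_gcd

/-- The binoid homomorphism `ψ : ℕ^∞ ∧_{ℕ^∞} ℕ^∞ → ℕ^∞`, `(n, m) ↦ (nl + mk)/gcd(k, l)`,
is injective iff `gcd(k, l) = 1`; in particular `ℕ^∞ ∧_{ℕ^∞} ℕ^∞` is torsion-free iff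
`k` and `l` are coprime. -/
theorem stmt_12 (k l : ℕ) (hk : 2 ≤ k) (hl : 2 ≤ l) :
    (∃ ψ : Nsmash k l →+ WithTop ℕ,
      ψ (Nsmash.mk k l ⊤) = ⊤ ∧
      ∀ n m : ℕ, ψ (Nsmash.mk k l (((n, m) : ℕ × ℕ) : WithTop (ℕ × ℕ))) =
        (((n * l + m * k) / Nat.gcd k l : ℕ) : WithTop ℕ)) ∧
    (∀ ψ : Nsmash k l →+ WithTop ℕ,
      ψ (Nsmash.mk k l ⊤) = ⊤ →
      (∀ n m : ℕ, ψ (Nsmash.mk k l (((n, m) : ℕ × ℕ) : WithTop (ℕ × ℕ))) =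
        (((n * l + m * k) / Nat.gcd k l : ℕ) : WithTop ℕ)) →
      (Function.Injective ψ ↔ Nat.gcd k l = 1)) ∧
    ((∀ c : ℕ, 1 ≤ c → ∀ a b : Nsmash k l, a ≠ Nsmash.mk k l ⊤ → b ≠ Nsmash.mk k l ⊤ →
        c • a = c • b → a = b) ↔ Nat.gcd k l = 1) :=
  stmt_12_general k l hk
end

section
/- Let M be a finitely generated positive cancellative commutative binoid with generators x, y (a minimal generating set) such that M is not cancellative-free in the sense that there is a relation kx = ly ≠ ∞ with k minimal ≥ 2. Then the l with kx = ly is unique, and l is also minimal with respect to ly ∈ ⟨x⟩; moreover ⟨x⟩ ∩ ⟨y⟩ = ⟨kx⟩. -/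
/-!
Cancelling the relation `k • x = l • y` from any relation `n • x = m • y ≠ ∞` with `k ≤ n`
leaves a relation `(n - k) • x = (m - l) • y ≠ ∞`; positivity rules out `m < l`, since otherwise
`(n - k) • x + (l - m) • y = 0` would force `y = 0`. Descending in this way, minimality of `k`
makes every relation a multiple of `k • x = l • y`, which gives all three claims.
-/

section Binoid

variable {M : Type*} [AddCommMonoid M]

theorem eq_zero_of_nsmul_eq_zero_of_pos (hpos : ∀ a b : M, a + b = 0 → a = 0) {a : M} {n : ℕ}
    (hn : n ≠ 0) (h : n • a = 0) : a = 0 := by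
  obtain ⟨n, rfl⟩ := Nat.exists_eq_add_one_of_ne_zero hn
  exact hpos a _ (by rwa [succ_nsmul'] at h)

theorem nsmul_left_inj_of_ne_inf {inf : M} (hpos : ∀ a b : M, a + b = 0 → a = 0)
    (hcanc : ∀ a b c : M, a + c = b + c → a + c ≠ inf → a = b) {a : M} (ha : a ≠ 0) {m n : ℕ}
    (h : m • a = n • a) (hinf : m • a ≠ inf) : m = n := by
  wlog hmn : m ≤ n generalizing m n
  · exact (this h.symm (h ▸ hinf) (by omega)).symm
  obtain ⟨d, rfl⟩ := Nat.exists_eq_add_of_le hmn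
  have hd : d • a = 0 := by
    refine hcanc _ _ (m • a) ?_ ?_ <;> rw [← add_nsmul, add_comm d, ← h]
    · rw [zero_add]
    · exact hinf
  by_contra hne
  exact ha (eq_zero_of_nsmul_eq_zero_of_pos hpos (by omega) hd)

theorem exists_eq_add_and_nsmul_eq_of_ne_inf {inf : M} (hpos : ∀ a b : M, a + b = 0 → a = 0)
    (hcanc : ∀ a b c : M, a + c = b + c → a + c ≠ inf → a = b) {x y : M} (hy : y ≠ 0)
    {k l r m : ℕ} (hrel : k • x = l • y) (h : (k + r) • x = m • y) (hinf : (k + r) • x ≠ inf) :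
    ∃ d, m = l + d ∧ r • x = d • y := by
  have hsplit : (k + r) • x = r • x + l • y := by rw [add_nsmul, hrel, add_comm]
  rcases le_or_gt l m with hlm | hml
  · obtain ⟨d, rfl⟩ := Nat.exists_eq_add_of_le hlm
    have hd : r • x + l • y = d • y + l • y := by rw [← hsplit, h, add_nsmul, add_comm]
    exact ⟨d, rfl, hcanc _ _ _ hd (hsplit ▸ hinf)⟩
  · obtain ⟨e, rfl⟩ := Nat.exists_eq_add_of_lt hml
    have he : (r • x + (e + 1) • y) + m • y = 0 + m • y :=
      calc r • x + (e + 1) • y + m • y = r • x + (m + e + 1) • y := by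
            rw [add_assoc, ← add_nsmul]; congr 2; omega
        _ = 0 + m • y := by rw [← hsplit, h, zero_add]
    have hzero : r • x + (e + 1) • y = 0 := hcanc _ _ _ he (by rw [he, zero_add, ← h]; exact hinf)
    rw [add_comm] at hzero
    exact (hy (eq_zero_of_nsmul_eq_zero_of_pos hpos (Nat.succ_ne_zero e) (hpos _ _ hzero))).elim

theorem exists_nsmul_eq_of_minimal_relation {inf : M} (habs : ∀ a : M, a + inf = inf)
    (hpos : ∀ a b : M, a + b = 0 → a = 0)
    (hcanc : ∀ a b c : M, a + c = b + c → a + c ≠ inf → a = b) {x y : M} (hy : y ≠ 0)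
    {k l : ℕ} (hk : k ≠ 0) (hrel : k • x = l • y)
    (hkmin : ∀ k' l' : ℕ, 1 ≤ k' → 1 ≤ l' → k' • x = l' • y → k' • x ≠ inf → k ≤ k')
    {n m : ℕ} (h : n • x = m • y) (hinf : n • x ≠ inf) : ∃ j : ℕ, n • x = j • (k • x) := by
  induction n using Nat.strong_induction_on generalizing m with
  | _ n ih =>
    by_cases hzero : n • x = 0
    · exact ⟨0, by rw [hzero, zero_smul]⟩
    have hn : 1 ≤ n := Nat.one_le_iff_ne_zero.2 fun h0 => hzero (h0 ▸ zero_smul ℕ x)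
    have hm : 1 ≤ m := Nat.one_le_iff_ne_zero.2 fun h0 => hzero (h.trans (h0 ▸ zero_smul ℕ y))
    obtain ⟨r, rfl⟩ := Nat.exists_eq_add_of_le (hkmin n m hn hm h hinf)
    obtain ⟨d, -, hr⟩ := exists_eq_add_and_nsmul_eq_of_ne_inf hpos hcanc hy hrel h hinf
    have hrinf : r • x ≠ inf := fun hr' => hinf (by rw [add_nsmul, hr', habs])
    obtain ⟨j, hj⟩ := ih r (by omega) hr hrinf
    exact ⟨j + 1, by rw [add_nsmul, hj, succ_nsmul', add_comm]⟩

end Binoid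

theorem stmt_14_general {M : Type*} [AddCommMonoid M] (inf : M)
    (habs : ∀ a : M, a + inf = inf) (x y : M)
    (hpos : ∀ a b : M, a + b = 0 → a = 0)
    (hcanc : ∀ a b c : M, a + c = b + c → a + c ≠ inf → a = b)
    (k l : ℕ) (hk : 2 ≤ k)
    (hrel : k • x = l • y) (hninf : k • x ≠ inf)
    (hkmin : ∀ k' l' : ℕ, 1 ≤ k' → 1 ≤ l' → k' • x = l' • y → k' • x ≠ inf → k ≤ k') :
    (∀ l' : ℕ, k • x = l' • y → l' = l) ∧
    (∀ n' l' : ℕ, 1 ≤ n' → 1 ≤ l' → n' • x = l' • y → n' • x ≠ inf → l ≤ l') ∧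
    {a : M | (∃ n : ℕ, a = n • x) ∨ a = inf} ∩ {a : M | (∃ m : ℕ, a = m • y) ∨ a = inf}
      = {a : M | (∃ n : ℕ, a = n • (k • x)) ∨ a = inf} := by
  have hy : y ≠ 0 := by
    rintro rfl
    have hx : x = 0 :=
      eq_zero_of_nsmul_eq_zero_of_pos hpos (by omega) (hrel.trans (smul_zero l))
    subst hx
    have := hkmin 1 1 le_rfl le_rfl rfl (by rwa [smul_zero] at hninf ⊢)
    omega
  refine ⟨fun l' h => ?_, fun n' l' hn' _ h hinf => ?_, ?_⟩
  · exact nsmul_left_inj_of_ne_inf hpos hcanc hy (h.symm.trans hrel) (h ▸ hninf)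
  · obtain ⟨r, rfl⟩ := Nat.exists_eq_add_of_le (hkmin n' l' hn' ‹_› h hinf)
    obtain ⟨d, rfl, -⟩ := exists_eq_add_and_nsmul_eq_of_ne_inf hpos hcanc hy hrel h hinf
    exact Nat.le_add_right l d
  · ext a
    simp only [Set.mem_inter_iff, Set.mem_ofPred_eq]
    constructor
    · rintro ⟨⟨n, rfl⟩ | hinf, ⟨m, hm⟩ | hinf'⟩
      · by_cases hinf : n • x = inf
        · exact Or.inr hinf
        · exact Or.inl (exists_nsmul_eq_of_minimal_relation habs hpos hcanc hy (by omega) hrel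
            hkmin hm hinf)
      all_goals exact Or.inr ‹_›
    · rintro (⟨j, rfl⟩ | hinf)
      · exact ⟨Or.inl ⟨j * k, (mul_nsmul' x j k).symm⟩, Or.inl ⟨j * l, by rw [hrel, mul_nsmul']⟩⟩
      · exact ⟨Or.inr hinf, Or.inr hinf⟩

/-- Let `M` be a positive cancellative commutative binoid generated by `x, y`, with
`k, l ≥ 2`, `k • x = l • y ≠ ∞` and `k` minimal with this property. Then `l` is unique,
`l` is also minimal with respect to `l • y ∈ ⟨x⟩`, and `⟨x⟩ ∩ ⟨y⟩ = ⟨k • x⟩`. -/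
theorem stmt_14 {M : Type*} [AddCommMonoid M] (inf : M)
    (habs : ∀ a : M, a + inf = inf) (x y : M)
    (hgen : ∀ a : M, a = inf ∨ ∃ n m : ℕ, a = n • x + m • y)
    (hpos : ∀ a b : M, a + b = 0 → a = 0)
    (hcanc : ∀ a b c : M, a + c = b + c → a + c ≠ inf → a = b)
    (k l : ℕ) (hk : 2 ≤ k) (hl : 2 ≤ l)
    (hrel : k • x = l • y) (hninf : k • x ≠ inf)
    (hkmin : ∀ k' l' : ℕ, 1 ≤ k' → 1 ≤ l' → k' • x = l' • y → k' • x ≠ inf → k ≤ k') :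
    (∀ l' : ℕ, k • x = l' • y → l' = l) ∧
    (∀ n' l' : ℕ, 1 ≤ n' → 1 ≤ l' → n' • x = l' • y → n' • x ≠ inf → l ≤ l') ∧
    {a : M | (∃ n : ℕ, a = n • x) ∨ a = inf} ∩ {a : M | (∃ m : ℕ, a = m • y) ∨ a = inf}
      = {a : M | (∃ n : ℕ, a = n • (k • x)) ∨ a = inf} :=
  stmt_14_general inf habs x y hpos hcanc k l hk hrel hninf hkmin
end
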